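/- Let C = tridiag(−1,1,0) ∈ ℝ^{N×N} and τ > 0, and let M ∈ ℝ^{n×n} be symmetric positive definite and L ∈ ℝ^{n×n} positive semidefinite (xᵀLx ≥ 0). Then the matrix I_N ⊗ L + (C/τ) ⊗ M has positive-definite symmetric part, and hence is invertible. -/

import Mathlib

/-!
Write `A = I ⊗ L + (C/τ) ⊗ M`. Since `M` is symmetric, the symmetric part is
`A + Aᵀ = I ⊗ (L + Lᵀ) + (C + Cᵀ)/τ ⊗ M`: a positive semidefinite matrix plus a Kronecker
product of two positive definite ones, hence positive definite. Positivity of `C + Cᵀ` comes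
from the summation-by-parts identity `2 xᵀCx = x_N² + ∑ₖ (x_{k+1} - x_k)²` for the sequence
`x₀ = 0, x₁, …, x_N`. Finally, a real matrix whose symmetric part is positive definite has
`xᵀAx > 0` for `x ≠ 0`, so it has trivial kernel.
-/

open Matrix
open scoped Kronecker

lemma isHermitian_add_transpose {n R : Type*} [AddCommMagma R] [Star R] [TrivialStar R]
    (A : Matrix n n R) : (A + Aᵀ).IsHermitian := by
  rw [IsHermitian, conjTranspose_eq_transpose_of_trivial, transpose_add, transpose_transpose,
    add_comm]

section SymmetricPart

variable {n R : Type*} [Fintype n] [CommRing R]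

lemma dotProduct_add_transpose_mulVec (A : Matrix n n R) (x : n → R) :
    x ⬝ᵥ (A + Aᵀ) *ᵥ x = 2 * (x ⬝ᵥ A *ᵥ x) := by
  rw [add_mulVec, dotProduct_add, dotProduct_transpose_mulVec, two_mul]

variable [PartialOrder R] [StarRing R] [TrivialStar R]

lemma mulVec_injective_of_posDef_add_transpose {A : Matrix n n R} (hA : (A + Aᵀ).PosDef) :
    Function.Injective A.mulVec := by
  refine (injective_iff_map_eq_zero A.mulVecLin).mpr fun x hx => ?_
  by_contra hx0
  have hpos := hA.dotProduct_mulVec_pos hx0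
  rw [star_trivial, dotProduct_add_transpose_mulVec, ← mulVecLin_apply, hx] at hpos
  simp at hpos

variable [IsStrictOrderedRing R]

lemma posSemidef_add_transpose {A : Matrix n n R} (hA : ∀ x, 0 ≤ x ⬝ᵥ A *ᵥ x) :
    (A + Aᵀ).PosSemidef :=
  .of_dotProduct_mulVec_nonneg (isHermitian_add_transpose A) fun x => by
    rw [star_trivial, dotProduct_add_transpose_mulVec]
    exact mul_nonneg zero_le_two (hA x)

lemma posDef_add_transpose {A : Matrix n n R} (hA : ∀ x, x ≠ 0 → 0 < x ⬝ᵥ A *ᵥ x) :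
    (A + Aᵀ).PosDef :=
  .of_dotProduct_mulVec_pos (isHermitian_add_transpose A) fun x hx => by
    rw [star_trivial, dotProduct_add_transpose_mulVec]
    exact mul_pos zero_lt_two (hA x hx)

end SymmetricPart

section ImplicitEuler

variable {R : Type*}

def implicitEulerMatrix (R : Type*) [Ring R] (N : ℕ) : Matrix (Fin N) (Fin N) R :=
  Matrix.of fun i j => if i = j then 1 else if (j : ℕ) + 1 = i then -1 else 0

def consZero [Zero R] {N : ℕ} (x : Fin N → R) : ℕ → R
  | 0 => 0
  | k + 1 => if h : k < N then x ⟨k, h⟩ else 0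

lemma consZero_succ [Zero R] {N : ℕ} (x : Fin N → R) (i : Fin N) :
    consZero x (i + 1) = x i := by
  simp [consZero]

lemma implicitEulerMatrix_mulVec [Ring R] {N : ℕ} (x : Fin N → R) (i : Fin N) :
    (implicitEulerMatrix R N *ᵥ x) i = consZero x (i + 1) - consZero x i := by
  have hrow : ∀ j, implicitEulerMatrix R N i j * x j =
      (if j = i then x j else 0) - (if (j : ℕ) + 1 = i then x j else 0) := by
    intro j
    by_cases hij : j = i
    · subst hij; simp [implicitEulerMatrix]
    · simp only [implicitEulerMatrix, of_apply, Ne.symm hij, hij, if_false]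
      split_ifs <;> simp
  rw [mulVec, dotProduct, Finset.sum_congr rfl fun j _ => hrow j, Finset.sum_sub_distrib,
    Finset.sum_ite_eq', if_pos (Finset.mem_univ _), consZero_succ]
  congr 1
  rcases i with ⟨_ | k, hk⟩
  · simp [consZero]
  · have hpred : ∀ j : Fin N, (j : ℕ) + 1 = k + 1 ↔ j = ⟨k, by omega⟩ := by
      intro j; simp only [Fin.ext_iff]; omega
    simp only [hpred, Finset.sum_ite_eq', Finset.mem_univ, if_true]
    simp [consZero, show k < N by omega]

lemma two_mul_sum_mul_sub_eq [CommRing R] (z : ℕ → R) (h0 : z 0 = 0) (N : ℕ) :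
    2 * ∑ k ∈ Finset.range N, z (k + 1) * (z (k + 1) - z k) =
      z N ^ 2 + ∑ k ∈ Finset.range N, (z (k + 1) - z k) ^ 2 := by
  induction N with
  | zero => simp [h0]
  | succ N ih => rw [Finset.sum_range_succ, Finset.sum_range_succ, mul_add, ih]; ring

lemma sum_sq_sub_pos [CommRing R] [LinearOrder R] [IsStrictOrderedRing R] {z : ℕ → R}
    (h0 : z 0 = 0) {N k : ℕ} (hk : k ≤ N) (hzk : z k ≠ 0) :
    0 < ∑ j ∈ Finset.range N, (z (j + 1) - z j) ^ 2 := by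
  refine (Finset.sum_nonneg fun j _ => sq_nonneg _).lt_of_ne fun hsum => hzk ?_
  have hstep := (Finset.sum_eq_zero_iff_of_nonneg fun j _ => sq_nonneg _).mp hsum.symm
  calc z k = z k - z 0 := by rw [h0, sub_zero]
    _ = ∑ j ∈ Finset.range k, (z (j + 1) - z j) := (Finset.sum_range_sub z k).symm
    _ = 0 := Finset.sum_eq_zero fun j hj =>
      (pow_eq_zero_iff two_ne_zero).mp <| hstep j <| Finset.range_subset_range.mpr hk hj

lemma two_mul_dotProduct_implicitEulerMatrix_mulVec [CommRing R] {N : ℕ} (x : Fin N → R) :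
    2 * (x ⬝ᵥ implicitEulerMatrix R N *ᵥ x) =
      consZero x N ^ 2 + ∑ k ∈ Finset.range N, (consZero x (k + 1) - consZero x k) ^ 2 := by
  rw [← two_mul_sum_mul_sub_eq _ rfl, dotProduct, ← Fin.sum_univ_eq_sum_range]
  simp only [implicitEulerMatrix_mulVec, consZero_succ]

theorem posDef_implicitEulerMatrix_add_transpose [CommRing R] [LinearOrder R]
    [IsStrictOrderedRing R] [StarRing R] [TrivialStar R] (N : ℕ) :
    (implicitEulerMatrix R N + (implicitEulerMatrix R N)ᵀ).PosDef := by
  refine posDef_add_transpose fun x hx => ?_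
  obtain ⟨i, hi⟩ := Function.ne_iff.mp hx
  have hdiff := sum_sq_sub_pos (z := consZero x) rfl i.2 (by rwa [consZero_succ])
  have hquad := two_mul_dotProduct_implicitEulerMatrix_mulVec x
  nlinarith [sq_nonneg (consZero x N)]

end ImplicitEuler

/-- The space-time discretization matrix `I_N ⊗ L + (C/τ) ⊗ M`, with `C` the
implicit-Euler difference matrix, `M` symmetric positive definite and `L`
positive semidefinite, has positive definite symmetric part and hence is
invertible. -/
theorem space_time_matrix_invertible {N n : ℕ}
    (C : Matrix (Fin N) (Fin N) ℝ)
    (hC : C = Matrix.of fun i j : Fin N =>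
      if i = j then (1 : ℝ) else if (j : ℕ) + 1 = (i : ℕ) then -1 else 0)
    (τ : ℝ) (hτ : 0 < τ)
    (M : Matrix (Fin n) (Fin n) ℝ) (hM : M.PosDef)
    (L : Matrix (Fin n) (Fin n) ℝ) (hL : ∀ x : Fin n → ℝ, 0 ≤ x ⬝ᵥ L.mulVec x) :
    ((((1 : Matrix (Fin N) (Fin N) ℝ) ⊗ₖ L + (τ⁻¹ • C) ⊗ₖ M) +
      ((1 : Matrix (Fin N) (Fin N) ℝ) ⊗ₖ L + (τ⁻¹ • C) ⊗ₖ M)ᵀ).PosDef) ∧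
    IsUnit ((1 : Matrix (Fin N) (Fin N) ℝ) ⊗ₖ L + (τ⁻¹ • C) ⊗ₖ M) := by
  set A := (1 : Matrix (Fin N) (Fin N) ℝ) ⊗ₖ L + (τ⁻¹ • C) ⊗ₖ M
  have hCpos : (C + Cᵀ).PosDef := hC ▸ posDef_implicitEulerMatrix_add_transpose N
  have hMT : Mᵀ = M := hM.isHermitian
  have hsymm : A + Aᵀ = 1 ⊗ₖ (L + Lᵀ) + (τ⁻¹ • (C + Cᵀ)) ⊗ₖ M := by
    simp only [A, transpose_add, ← kroneckerMap_transpose, transpose_one, transpose_smul, hMT,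
      kronecker_add, smul_add, add_kronecker]
    abel
  have hPD : (A + Aᵀ).PosDef := hsymm ▸
    PosDef.posSemidef_add (PosSemidef.one.kronecker (posSemidef_add_transpose hL))
      ((hCpos.smul (inv_pos.mpr hτ)).kronecker hM)
  exact ⟨hPD, mulVec_injective_iff_isUnit.mp (mulVec_injective_of_posDef_add_transpose hPD)⟩
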